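/- Let X = (ℝⁿ, ‖·‖) be a Banach space with dual norm ‖·‖_*, let A = (a_{ij}) be a nonsingular n×n real matrix with cofactors A_{ij}, and set y_j = (A_{1j},…,A_{nj})ᵀ. Then the largest γ > 0 with γB_X ⊆ A([-1,1]ⁿ) equals min over i ∈ [n] of |det A| / ‖y_i‖_*. -/

import Mathlib

open scoped Pointwise

/-- The dual norm `‖y‖_* = sup {yᵀx : f x ≤ 1}` of `y` with respect to the
norm `f` on `ℝⁿ`. -/
noncomputable def dualNorm {n : ℕ} (f : Seminorm ℝ (Fin n → ℝ))
    (y : Fin n → ℝ) : ℝ :=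
  sSup {d : ℝ | ∃ x : Fin n → ℝ, f x ≤ 1 ∧ d = ∑ i, y i * x i}

/-!
By Cramer's rule, `A x = y` has the solution `x = (det A)⁻¹ • adj A *ᵥ y`, so `y ∈ A([-1,1]ⁿ)`
exactly when `|y_i ⬝ᵥ y| ≤ |det A|` for every row `y_i` of the adjugate. Testing this on `γ • x`
for `f x ≤ 1` turns `γ B_X ⊆ A([-1,1]ⁿ)` into `γ ‖y_i‖_* ≤ |det A|` for all `i`, and the largest
such `γ` is the minimum of `|det A| / ‖y_i‖_*`. That the dual norms are finite and positive comes
from `f` being a genuine norm on a finite-dimensional space: it dominates a multiple of the sup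
norm by compactness of the unit sphere.
-/

namespace Seminorm

variable {E : Type*} [NormedAddCommGroup E] [NormedSpace ℝ E] [FiniteDimensional ℝ E]

theorem continuous_of_finiteDimensional (f : Seminorm ℝ E) : Continuous f :=
  continuousOn_univ.mp (f.convexOn.continuousOn isOpen_univ)

theorem exists_pos_mul_norm_le (f : Seminorm ℝ E) (hf : ∀ x, f x = 0 → x = 0) :
    ∃ c, 0 < c ∧ ∀ x, c * ‖x‖ ≤ f x := by
  have hpos : ∀ u ∈ Metric.sphere (0 : E) 1, 0 < f u := fun u hu =>
    (apply_nonneg f u).lt_of_ne fun h => by simp [hf u h.symm] at hu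
  obtain ⟨c, hc, hcf⟩ := (isCompact_sphere (0 : E) 1).exists_forall_le'
    f.continuous_of_finiteDimensional.continuousOn hpos
  refine ⟨c, hc, fun x => ?_⟩
  rcases eq_or_ne x 0 with rfl | hx
  · simp
  have hx' : 0 < ‖x‖ := norm_pos_iff.mpr hx
  have hu : ‖x‖⁻¹ • x ∈ Metric.sphere (0 : E) 1 := by
    simp [norm_smul, hx'.ne']
  have hcu := hcf _ hu
  rw [map_smul_eq_mul, norm_inv, norm_norm, ← div_eq_inv_mul, le_div_iff₀ hx'] at hcu
  linarith

theorem isBounded_setOf_le_one (f : Seminorm ℝ E) (hf : ∀ x, f x = 0 → x = 0) :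
    Bornology.IsBounded {x | f x ≤ 1} := by
  obtain ⟨c, hc, hcf⟩ := f.exists_pos_mul_norm_le hf
  refine (Metric.isBounded_closedBall (x := 0) (r := c⁻¹)).subset fun x hx => ?_
  rw [mem_closedBall_zero_iff, ← one_div, le_div_iff₀' hc]
  exact (hcf x).trans hx

end Seminorm

section DualNorm

variable {n : ℕ} {f : Seminorm ℝ (Fin n → ℝ)}

theorem dualNorm_eq_sSup_image (y : Fin n → ℝ) :
    dualNorm f y = sSup ((y ⬝ᵥ ·) '' {x | f x ≤ 1}) := by
  simp only [dualNorm, dotProduct, Set.image, eq_comm]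
  rfl

theorem bddAbove_dotProduct_image (hf : ∀ x, f x = 0 → x = 0) (y : Fin n → ℝ) :
    BddAbove ((y ⬝ᵥ ·) '' {x | f x ≤ 1}) :=
  ((LinearMap.toContinuousLinearMap (dotProductBilin ℝ ℝ y)).lipschitz.isBounded_image
    (f.isBounded_setOf_le_one hf)).bddAbove

theorem dotProduct_le_dualNorm (hf : ∀ x, f x = 0 → x = 0) (y : Fin n → ℝ) {x : Fin n → ℝ}
    (hx : f x ≤ 1) : y ⬝ᵥ x ≤ dualNorm f y := by
  rw [dualNorm_eq_sSup_image]
  exact le_csSup (bddAbove_dotProduct_image hf y) ⟨x, hx, rfl⟩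

theorem abs_dotProduct_le_dualNorm (hf : ∀ x, f x = 0 → x = 0) (y : Fin n → ℝ)
    {x : Fin n → ℝ} (hx : f x ≤ 1) : |y ⬝ᵥ x| ≤ dualNorm f y := by
  refine abs_le.mpr ⟨?_, dotProduct_le_dualNorm hf y hx⟩
  have := dotProduct_le_dualNorm hf y (x := -x) (by rwa [map_neg_eq_map])
  rw [dotProduct_neg] at this
  linarith

theorem dualNorm_le_iff (hf : ∀ x, f x = 0 → x = 0) (y : Fin n → ℝ) (c : ℝ) :
    dualNorm f y ≤ c ↔ ∀ x, f x ≤ 1 → |y ⬝ᵥ x| ≤ c := by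
  refine ⟨fun h x hx => (abs_dotProduct_le_dualNorm hf y hx).trans h, fun h => ?_⟩
  rw [dualNorm_eq_sSup_image]
  exact csSup_le ⟨0, 0, by simp⟩ (by rintro _ ⟨x, hx, rfl⟩; exact (le_abs_self _).trans (h x hx))

theorem dualNorm_pos (hf : ∀ x, f x = 0 → x = 0) {y : Fin n → ℝ} (hy : y ≠ 0) :
    0 < dualNorm f y := by
  by_contra! h
  have hfy : 0 < f y := (apply_nonneg f y).lt_of_ne fun h0 => hy (hf y h0.symm)
  have hx : f ((f y)⁻¹ • y) ≤ 1 := by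
    rw [map_smul_eq_mul, Real.norm_eq_abs, abs_inv, abs_of_pos hfy, inv_mul_cancel₀ hfy.ne']
  have hzero := (dualNorm_le_iff hf y 0).mp h _ hx
  rw [abs_nonpos_iff, dotProduct_smul, smul_eq_mul, mul_eq_zero, dotProduct_self_eq_zero] at hzero
  exact hzero.elim (fun h0 => (inv_pos.mpr hfy).ne' h0) hy

theorem smul_setOf_le_one_subset_iff {ι : Type*} (hf : ∀ x, f x = 0 → x = 0) {γ : ℝ} (hγ : 0 < γ) (v : ι → Fin n → ℝ) (c : ℝ) :
    γ • {x | f x ≤ 1} ⊆ {y | ∀ i, |v i ⬝ᵥ y| ≤ c} ↔ ∀ i, dualNorm f (v i) ≤ c / γ := by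
  simp only [Set.smul_set_subset_iff, Set.mem_ofPred_eq, dotProduct_smul, smul_eq_mul, abs_mul,
    abs_of_pos hγ, dualNorm_le_iff hf, le_div_iff₀' hγ]
  exact ⟨fun h i x hx => h hx i, fun h x hx i => h i x hx⟩

end DualNorm

namespace Matrix

variable {ι : Type*} [Fintype ι] [DecidableEq ι]

theorem adjugate_row_ne_zero {R : Type*} [CommRing R] [NoZeroDivisors R] {A : Matrix ι ι R} (hA : A.det ≠ 0) (i : ι) :
    A.adjugate i ≠ 0 := fun h =>
  pow_ne_zero _ hA (det_adjugate A ▸ det_eq_zero_of_row_eq_zero i (congrFun h))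

theorem toLin'_image_cube {K : Type*} [Field K] [LinearOrder K] [IsStrictOrderedRing K]
    {A : Matrix ι ι K} (hA : A.det ≠ 0) :
    toLin' A '' {x | ∀ i, x i ∈ Set.Icc (-1 : K) 1} =
      {y | ∀ i, |A.adjugate i ⬝ᵥ y| ≤ |A.det|} := by
  ext y
  rw [Set.image_eq_preimage_of_inverse (g := toLin' A⁻¹) (fun x => ?_) (fun x => ?_)]
  · simp only [Set.mem_preimage, Set.mem_ofPred_eq, toLin'_apply, inv_def,
      Ring.inverse_eq_inv', smul_mulVec, Pi.smul_apply, smul_eq_mul, Set.mem_Icc, ← abs_le,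
      abs_mul, abs_inv, inv_mul_le_iff₀ (abs_pos.mpr hA), mul_one]
    rfl
  · simp [mulVec_mulVec, nonsing_inv_mul A hA.isUnit]
  · simp [mulVec_mulVec, mul_nonsing_inv A hA.isUnit]

end Matrix

theorem Real.sSup_pos_forall_le_eq_iInf {ι : Type*} [Finite ι] {b : ι → ℝ} (hb : ∀ i, 0 < b i) :
    sSup {γ : ℝ | 0 < γ ∧ ∀ i, γ ≤ b i} = ⨅ i, b i := by
  rcases isEmpty_or_nonempty ι with hι | hι
  -- the set is then all of `Ioi 0`, whose `sSup` is the junk value `0`, like `⨅` over `∅`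
  · simp only [IsEmpty.forall_iff, and_true, Real.iInf_of_isEmpty]
    exact Real.sSup_of_not_bddAbove (not_bddAbove_Ioi 0)
  obtain ⟨i₀, hi₀⟩ := exists_eq_ciInf_of_finite (f := b)
  have hset : {γ : ℝ | 0 < γ ∧ ∀ i, γ ≤ b i} = Set.Ioc 0 (⨅ i, b i) := by
    ext γ
    simp [le_ciInf_iff (Finite.bddBelow_range b)]
  rw [hset, csSup_Ioc (hi₀ ▸ hb i₀)]

theorem gamma2_eq_min_det_div_dualNorm {n : ℕ}
    (A : Matrix (Fin n) (Fin n) ℝ) (hA : A.det ≠ 0)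
    (f : Seminorm ℝ (Fin n → ℝ)) (hf : ∀ x, f x = 0 → x = 0) :
    sSup {γ : ℝ | 0 < γ ∧
        γ • {x | f x ≤ 1}
          ⊆ (Matrix.toLin' A) '' {x | ∀ i, x i ∈ Set.Icc (-1 : ℝ) 1}}
      = ⨅ i : Fin n, |A.det| / dualNorm f (A.adjugate i) := by
  have hd : ∀ i, 0 < dualNorm f (A.adjugate i) := fun i =>
    dualNorm_pos hf (A.adjugate_row_ne_zero hA i)
  have hset : {γ : ℝ | 0 < γ ∧
      γ • {x | f x ≤ 1} ⊆ (Matrix.toLin' A) '' {x | ∀ i, x i ∈ Set.Icc (-1 : ℝ) 1}} =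
      {γ | 0 < γ ∧ ∀ i, γ ≤ |A.det| / dualNorm f (A.adjugate i)} := by
    ext γ
    refine and_congr_right fun hγ => ?_
    rw [Matrix.toLin'_image_cube hA, smul_setOf_le_one_subset_iff hf hγ A.adjugate]
    exact forall_congr' fun i => le_div_comm₀ (hd i) hγ
  rw [hset, Real.sSup_pos_forall_le_eq_iInf fun i => div_pos (abs_pos.mpr hA) (hd i)]
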